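/- For every integer n ≥ 1, there is no (x,y) ∈ [0,1)² such that simultaneously Λ_n(x,y) = (0,0,0) and Λ_n(y,x) = (0,1,1). (This shows the junction tile with right label (0,0,0) and top label (0,1,1) does not occur as TILE_n(x,y).) -/

import Mathlib

open scoped BigOperators

namespace MetallicMean

/-- A 3-dimensional integer vector. -/
abbrev Vec3 := ℤ × ℤ × ℤ

/-- A Wang tile is a quadruple (right, top, left, bottom) of labels. -/
abbrev Tile := Vec3 × Vec3 × Vec3 × Vec3

def right (τ : Tile) : Vec3 := τ.1
def top (τ : Tile) : Vec3 := τ.2.1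
def left (τ : Tile) : Vec3 := τ.2.2.1
def bottom (τ : Tile) : Vec3 := τ.2.2.2

/-- Reflection of a tile by the positive diagonal: (r,t,ℓ,b) ↦ (t,r,b,ℓ). -/
def reflect (τ : Tile) : Tile := (top τ, right τ, bottom τ, left τ)

/-- The set V_n of admissible labels. -/
def Vset (n : ℤ) : Set Vec3 :=
  {v | 0 ≤ v.1 ∧ v.1 ≤ v.2.1 ∧ v.2.1 ≤ v.2.2 ∧ v.2.2 ≤ n + 1 ∧ v.2.1 ≤ 1}

/-- The function θ_n. -/
def theta (n : ℤ) (u v : Vec3) : Vec3 :=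
  (u.1,
   if u.1 = 0 then v.2.2 - n else 1,
   if v.1 = 0 then v.2.1 + u.1 else u.2.2 + 1)

/-- The set 𝒞_n of instances of the θ_n-chip. -/
def Cset (n : ℤ) : Set Tile :=
  {τ | ∃ u v : Vec3, u ∈ Vset n ∧ v ∈ Vset n ∧
      theta n u v ∈ Vset n ∧ theta n v u ∈ Vset n ∧
      τ = (theta n u v, theta n v u, u, v)}

/-- The n-th metallic mean β, the positive root of x² - nx - 1. -/
noncomputable def beta (n : ℤ) : ℝ := ((n : ℝ) + Real.sqrt ((n : ℝ) ^ 2 + 4)) / 2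

/-- The conjugate root β* = n - β = -β⁻¹. -/
noncomputable def betaStar (n : ℤ) : ℝ := (n : ℝ) - beta n

/-- The coding map Λ_n. -/
noncomputable def Lam (n : ℤ) (x y : ℝ) : Vec3 :=
  (⌊y + betaStar n + 1⌋,
   ⌊(beta n)⁻¹ * x + y + betaStar n + 1⌋,
   ⌊beta n * x + y + betaStar n + 1⌋)

/-- The Wang tile TILE_n(x, y), written as (right, top, left, bottom). -/
noncomputable def TileAt (n : ℤ) (x y : ℝ) : Tile :=
  (Lam n (Int.fract x) (Int.fract y),
   Lam n (Int.fract y) (Int.fract x),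
   Lam n (Int.fract (x + betaStar n)) (Int.fract y),
   Lam n (Int.fract (y + betaStar n)) (Int.fract x))

/-- The metallic mean Wang tile set 𝒯_n = {TILE_n(x,y) : (x,y) ∈ [0,1]²}. -/
def Tset (n : ℤ) : Set Tile :=
  {τ | ∃ x y : ℝ, x ∈ Set.Icc (0 : ℝ) 1 ∧ y ∈ Set.Icc (0 : ℝ) 1 ∧ τ = TileAt n x y}

/-- A configuration assigns a tile to every position of ℤ². -/
abbrev Config := ℤ × ℤ → Tile

/-- A configuration is valid w.r.t. a set `S` of Wang tiles if all its tiles are in `S`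
and contiguous edges of adjacent tiles match. -/
def IsValid (S : Set Tile) (w : Config) : Prop :=
  (∀ p : ℤ × ℤ, w p ∈ S) ∧
  ∀ p : ℤ × ℤ,
    right (w p) = left (w (p + (1, 0))) ∧
    top (w p) = bottom (w (p + (0, 1)))

/-- The Wang shift Ω_S of all valid configurations over `S`. -/
def OmegaOf (S : Set Tile) : Set Config := {w | IsValid S w}

/-- The shift ℤ²-action on configurations: (σ^k w)(p) = w(p + k). -/
def shift (k : ℤ × ℤ) (w : Config) : Config := fun p => w (p + k)

end MetallicMean

/-!
Since β* = -β⁻¹, the third coordinate of Λ_n(x, y) vanishing says βx + y < β⁻¹, while the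
second coordinate of Λ_n(y, x) being 1 says (after multiplying by β) that 1 ≤ βx + y.
These are incompatible because β ≥ 1.
-/

namespace MetallicMean

section

variable (n : ℤ)

theorem sq_sqrt_sq_add_four : √((n : ℝ) ^ 2 + 4) ^ 2 = (n : ℝ) ^ 2 + 4 :=
  Real.sq_sqrt (by positivity)

theorem beta_pos : 0 < beta n := by
  rw [beta]
  nlinarith [sq_sqrt_sq_add_four n, Real.sqrt_nonneg ((n : ℝ) ^ 2 + 4)]

theorem beta_mul_self : beta n * beta n = n * beta n + 1 := by
  rw [beta]
  linear_combination sq_sqrt_sq_add_four n / 4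

theorem inv_beta : (beta n)⁻¹ = beta n - n := by
  apply inv_eq_of_mul_eq_one_right
  linear_combination beta_mul_self n

theorem betaStar_eq_neg_inv_beta : betaStar n = -(beta n)⁻¹ := by
  rw [betaStar, inv_beta]
  ring

theorem inv_beta_le_one (hn : 0 ≤ n) : (beta n)⁻¹ ≤ 1 := by
  have hn' : (0 : ℝ) ≤ n := by exact_mod_cast hn
  rw [inv_le_one₀ (beta_pos n)]
  nlinarith [beta_pos n, beta_mul_self n]

theorem lam_snd_snd_lt_one_iff (x y : ℝ) :
    (Lam n x y).2.2 < 1 ↔ beta n * x + y < (beta n)⁻¹ := by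
  rw [Lam, Int.floor_lt, betaStar_eq_neg_inv_beta]
  push_cast
  constructor <;> intro h <;> linarith

theorem one_le_lam_snd_fst_iff (x y : ℝ) :
    1 ≤ (Lam n y x).2.1 ↔ 1 ≤ beta n * x + y := by
  rw [Lam, Int.le_floor, betaStar_eq_neg_inv_beta]
  push_cast
  have hβ := beta_pos n
  calc (1 : ℝ) ≤ (beta n)⁻¹ * y + x + -(beta n)⁻¹ + 1
      ↔ (beta n)⁻¹ * 1 ≤ (beta n)⁻¹ * (beta n * x + y) := by
        rw [mul_add, ← mul_assoc, inv_mul_cancel₀ hβ.ne']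
        constructor <;> intro h <;> linarith
    _ ↔ 1 ≤ beta n * x + y := mul_le_mul_iff_of_pos_left (inv_pos.2 hβ)

end

/-- There is no (x,y) ∈ [0,1)² with Λ_n(x,y) = (0,0,0) and Λ_n(y,x) = (0,1,1). -/
theorem statement12 (n : ℤ) (hn : 1 ≤ n) :
    ¬ ∃ x y : ℝ, x ∈ Set.Ico (0 : ℝ) 1 ∧ y ∈ Set.Ico (0 : ℝ) 1 ∧
      Lam n x y = ((0, 0, 0) : Vec3) ∧ Lam n y x = ((0, 1, 1) : Vec3) := by
  rintro ⟨x, y, -, -, hxy, hyx⟩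
  have hlt : beta n * x + y < (beta n)⁻¹ :=
    (lam_snd_snd_lt_one_iff n x y).1 (by simp [hxy])
  have hle : 1 ≤ beta n * x + y :=
    (one_le_lam_snd_fst_iff n x y).1 (by simp [hyx])
  linarith [inv_beta_le_one n (by omega)]

end MetallicMean
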